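/- arXiv:0908.1657 — 6 statements merged into one kernel-verified Lean document; each statement's English description precedes it below -/
import Mathlib

section
/- For every real δ > 0 and every integer r with 1 ≤ r ≤ s_n, the number of elements b ∈ F_q for which |N_{f_b}(r) − r·P/q| ≥ δ·√(r·q^{n-2}) is at most q/δ². -/
/-- The box `X^{n+1}(r) = {0,…,s₁−1} × ⋯ × {0,…,s_n−1} × {0,…,r−1}` of exponent tuples,
where `sᵢ` is the multiplicative order of `g i` and the last coordinate is truncated
at `r`. -/
noncomputable def expBox {F : Type*} [Monoid F] {n : ℕ} (g : Fin (n + 1) → Fˣ) (r : ℕ) :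
    Finset (Fin (n + 1) → ℕ) :=
  Fintype.piFinset fun i => Finset.range (if i = Fin.last n then r else orderOf (g i))

/-- The exponential polynomial `f_b(x) = a₁g₁^{x₁} + ⋯ + a_{n+1}g_{n+1}^{x_{n+1}} − b`. -/
noncomputable def expPoly {F : Type*} [Field F] {n : ℕ} (a g : Fin (n + 1) → Fˣ) (b : F)
    (x : Fin (n + 1) → ℕ) : F :=
  (∑ i, (a i : F) * (g i : F) ^ x i) - b

/-- `S_{f_b}(r)`: the set of zeros of `f_b` in the box `X^{n+1}(r)`. -/
noncomputable def solSet {F : Type*} [Field F] [DecidableEq F] {n : ℕ} (a g : Fin (n + 1) → Fˣ)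
    (b : F) (r : ℕ) : Finset (Fin (n + 1) → ℕ) :=
  (expBox g r).filter fun x => expPoly a g b x = 0

/-- `N_{f_b}(r) = #S_{f_b}(r)`. -/
noncomputable def solCount {F : Type*} [Field F] [DecidableEq F] {n : ℕ} (a g : Fin (n + 1) → Fˣ)
    (b : F) (r : ℕ) : ℕ :=
  (solSet a g b r).card

/-- `P = ∏_{l=1}^{n} s_l`, the product of the multiplicative orders of all the `g i`
except the last one. -/
noncomputable def ordProd {F : Type*} [Monoid F] {n : ℕ} (g : Fin (n + 1) → Fˣ) : ℕ :=
  ∏ i : Fin n, orderOf (g i.castSucc)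

/-!
Fix a primitive additive character `ψ` of `F` and put `S t = ∑_{x ∈ X^n(r)} ψ (t · f₀ x)`. Parseval
turns the variance into the Fourier side: `q · ∑_b (N_b − rP/q)² = ∑_{t ≠ 0} ‖S t‖²`. The sum
`S t` factors over the coordinates. A factor belonging to a full orbit of `⟨gᵢ⟩` is invariant
under `t ↦ t gᵢ`, so its square is at most the average of the squares over that orbit, hence at
most `q` by Parseval. Summing the square of the truncated last factor over all `t` gives `q r`,
again by Parseval. So the variance is at most `qⁿ r`, and Chebyshev's inequality concludes.
-/

open Finset

theorem ncard_setOf_le_abs_le_sum_sq_div {α : Type*} [Fintype α] (f : α → ℝ) {c : ℝ} (hc : 0 < c) :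
    ({x | c ≤ |f x|}.ncard : ℝ) ≤ (∑ x, f x ^ 2) / c ^ 2 := by
  classical
  rw [le_div_iff₀ (by positivity), Set.ncard_eq_toFinset_card', Set.toFinset_ofPred, ← nsmul_eq_mul]
  calc #{x | c ≤ |f x|} • c ^ 2 ≤ ∑ x with c ≤ |f x|, f x ^ 2 :=
        card_nsmul_le_sum _ _ _ fun x hx => by
          rw [← sq_abs (f x)]; exact pow_le_pow_left₀ hc.le (mem_filter.1 hx).2 2
    _ ≤ ∑ x, f x ^ 2 := sum_le_univ_sum_of_nonneg fun _ => sq_nonneg _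

lemma Units.injOn_mul_coe_pow {M : Type*} [MonoidWithZero M] [IsLeftCancelMulZero M] {c : M}
    (hc : c ≠ 0) (u : Mˣ) :
    Set.InjOn (fun x : ℕ => c * (u : M) ^ x) (Set.Iio (orderOf u)) := fun _ hx _ hy hxy =>
  pow_injOn_Iio_orderOf (x := (u : M)) (by rwa [orderOf_units]) (by rwa [orderOf_units])
    (mul_left_cancel₀ hc hxy)

namespace AddChar

lemma map_sum_eq_prod {ι A M : Type*} [AddCommMonoid A] [CommMonoid M] (ψ : AddChar A M)
    (s : Finset ι) (f : ι → A) : ψ (∑ i ∈ s, f i) = ∏ i ∈ s, ψ (f i) := by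
  induction s using Finset.cons_induction with
  | empty => simp
  | cons i s hi ih => rw [sum_cons, prod_cons, map_add_eq_mul, ih]

lemma exists_isPrimitive (F : Type*) [Field F] [Finite F] :
    ∃ ψ : AddChar F ℂ, ψ.IsPrimitive := by
  obtain ⟨ψ, hψ⟩ := exists_apply_ne_zero.2 (one_ne_zero (α := F))
  exact ⟨ψ, .of_ne_one fun h => hψ (by rw [h, one_apply])⟩

section CommRing

variable {R : Type*} [CommRing R] [Fintype R] [DecidableEq R] {ψ : AddChar R ℂ}

theorem sum_norm_sq_sum_mul_mulShift (hψ : ψ.IsPrimitive) (f : R → ℂ) :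
    ∑ t, ‖∑ b, f b * ψ (t * b)‖ ^ 2 = Fintype.card R * ∑ b, ‖f b‖ ^ 2 := by
  have hconj (t b : R) : starRingEnd ℂ (ψ (t * b)) = ψ (t * -b) := by
    rw [mul_neg, map_neg_eq_conj]
  suffices h : ∑ t, ((‖∑ b, f b * ψ (t * b)‖ : ℂ) ^ 2)
      = Fintype.card R * ∑ b, (‖f b‖ : ℂ) ^ 2 by exact_mod_cast h
  calc ∑ t, ((‖∑ b, f b * ψ (t * b)‖ : ℂ) ^ 2)
      = ∑ t, ∑ b, ∑ c, f b * starRingEnd ℂ (f c) * ψ (t * (b - c)) := by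
        refine sum_congr rfl fun t _ => ?_
        rw [← Complex.mul_conj', map_sum, sum_mul_sum]
        refine sum_congr rfl fun b _ => sum_congr rfl fun c _ => ?_
        rw [map_mul (starRingEnd ℂ), hconj, mul_sub, sub_eq_add_neg, ← mul_neg, map_add_eq_mul]
        ring
    _ = ∑ b, ∑ c, f b * starRingEnd ℂ (f c) * ∑ t, ψ (t * (b - c)) := by
        rw [sum_comm]
        refine sum_congr rfl fun b _ => ?_
        rw [sum_comm]
        simp_rw [mul_sum]
    _ = Fintype.card R * ∑ b, (‖f b‖ : ℂ) ^ 2 := by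
        simp only [sum_mulShift _ hψ, sub_eq_zero, Nat.cast_ite, Nat.cast_zero, mul_ite, mul_zero,
          sum_ite_eq, mem_univ, if_true, mul_sum, Complex.mul_conj']
        exact sum_congr rfl fun b _ => mul_comm _ _

theorem sum_norm_sq_sum_mulShift (hψ : ψ.IsPrimitive) {ι : Type*} (B : Finset ι) (v : ι → R) :
    ∑ t, ‖∑ i ∈ B, ψ (t * v i)‖ ^ 2 = Fintype.card R * ∑ b, (#{i ∈ B | v i = b} : ℝ) ^ 2 := by
  have hfiber (t : R) : ∑ i ∈ B, ψ (t * v i) = ∑ b, (#{i ∈ B | v i = b} : ℂ) * ψ (t * b) := by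
    rw [← sum_fiberwise B v]
    refine sum_congr rfl fun b _ => ?_
    rw [sum_congr rfl fun i hi => by rw [(mem_filter.1 hi).2], sum_const, nsmul_eq_mul]
  simp_rw [hfiber, sum_norm_sq_sum_mul_mulShift hψ, Complex.norm_natCast]

theorem sum_norm_sq_sum_mulShift_of_injOn (hψ : ψ.IsPrimitive) {ι : Type*} {B : Finset ι}
    {v : ι → R} (hv : Set.InjOn v B) :
    ∑ t, ‖∑ i ∈ B, ψ (t * v i)‖ ^ 2 = Fintype.card R * #B := by
  rw [sum_norm_sq_sum_mulShift hψ, card_eq_sum_card_fiberwise fun i _ => mem_coe.2 (mem_univ (v i))]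
  push_cast
  congr 1
  refine sum_congr rfl fun b _ => ?_
  have : #{i ∈ B | v i = b} ≤ 1 := card_le_one.2 fun i hi j hj =>
    hv (mem_filter.1 hi).1 (mem_filter.1 hj).1 ((mem_filter.1 hi).2.trans (mem_filter.1 hj).2.symm)
  interval_cases #{i ∈ B | v i = b} <;> norm_num

theorem card_mul_sum_sq_card_fiber_sub (hψ : ψ.IsPrimitive) {ι : Type*} (B : Finset ι)
    (v : ι → R) :
    Fintype.card R * ∑ b, ((#{i ∈ B | v i = b} : ℝ) - #B / Fintype.card R) ^ 2
      = ∑ t ∈ univ.erase 0, ‖∑ i ∈ B, ψ (t * v i)‖ ^ 2 := by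
  have hq : (Fintype.card R : ℝ) ≠ 0 := by exact_mod_cast Fintype.card_ne_zero
  have htotal : ∑ b, (#{i ∈ B | v i = b} : ℝ) = #B := by
    exact_mod_cast (card_eq_sum_card_fiberwise fun i _ => mem_coe.2 (mem_univ (v i))).symm
  have hzero : ‖∑ i ∈ B, ψ (0 * v i)‖ ^ 2 = (#B : ℝ) ^ 2 := by simp
  have hexpand : ∑ b, ((#{i ∈ B | v i = b} : ℝ) - #B / Fintype.card R) ^ 2
      = ∑ b, (#{i ∈ B | v i = b} : ℝ) ^ 2 - #B ^ 2 / Fintype.card R := by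
    simp only [sub_sq, sum_add_distrib, sum_sub_distrib, ← sum_mul, ← mul_sum, htotal, sum_const,
      card_univ, nsmul_eq_mul]
    field_simp
    ring
  rw [sum_erase_eq_sub (mem_univ 0), sum_norm_sq_sum_mulShift hψ, hzero, hexpand]
  field_simp

end CommRing

variable {F : Type*} [Field F] [Fintype F] [DecidableEq F] {ψ : AddChar F ℂ}

theorem norm_sq_sum_range_orderOf_le (hψ : ψ.IsPrimitive) (u : Fˣ) {w : F} (hw : w ≠ 0) :
    ‖∑ x ∈ range (orderOf u), ψ (w * u ^ x)‖ ^ 2 ≤ Fintype.card F := by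
  set s := orderOf u
  set A : F → ℂ := fun z => ∑ x ∈ range s, ψ (z * u ^ x)
  have hshift (z : F) : A (z * u) = A z := by
    obtain ⟨k, hk⟩ : ∃ k, s = k + 1 := Nat.exists_eq_add_one.2 (orderOf_pos u)
    have hperiod : (u : F) ^ (k + 1) = 1 := by
      rw [← hk, ← Units.val_pow_eq_pow_val, pow_orderOf_eq_one, Units.val_one]
    simp only [A, mul_assoc, ← pow_succ']
    rw [hk, sum_range_succ, hperiod, sum_range_succ', pow_zero]
  have hinv (j : ℕ) : A (w * u ^ j) = A w := by
    induction j with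
    | zero => simp
    | succ j ih => rw [pow_succ, ← mul_assoc, hshift, ih]
  have hs : (0 : ℝ) < s := by exact_mod_cast orderOf_pos u
  have horbit : s * ‖A w‖ ^ 2 ≤ Fintype.card F * s :=
    calc (s : ℝ) * ‖A w‖ ^ 2 = ∑ j ∈ range s, ‖A (w * u ^ j)‖ ^ 2 := by simp [hinv]
      _ = ∑ z ∈ (range s).image (fun j => w * u ^ j), ‖A z‖ ^ 2 := by
        rw [sum_image (by rw [coe_range]; exact Units.injOn_mul_coe_pow hw u)]
      _ ≤ ∑ z, ‖A z‖ ^ 2 := sum_le_univ_sum_of_nonneg fun _ => by positivity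
      _ = Fintype.card F * s := by
        simpa using sum_norm_sq_sum_mulShift_of_injOn hψ (B := range s) (v := fun x => (u : F) ^ x)
          (by simpa [coe_range] using Units.injOn_mul_coe_pow one_ne_zero u)
  exact le_of_mul_le_mul_left (horbit.trans_eq (mul_comm _ _)) hs

end AddChar

section ExpSum

variable {F : Type*} [Field F] {n : ℕ}

def expSum (a g : Fin (n + 1) → Fˣ) (x : Fin (n + 1) → ℕ) : F :=
  ∑ i, (a i : F) * (g i : F) ^ x i

lemma card_expBox (g : Fin (n + 1) → Fˣ) (r : ℕ) : #(expBox g r) = ordProd g * r := by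
  rw [expBox, Fintype.card_piFinset, Fin.prod_univ_castSucc, ordProd]
  simp [(Fin.castSucc_lt_last _).ne]

lemma solCount_eq_card_filter [DecidableEq F] (a g : Fin (n + 1) → Fˣ) (b : F) (r : ℕ) :
    solCount a g b r = #{x ∈ expBox g r | expSum a g x = b} := by
  rw [solCount, solSet]
  exact congrArg card (filter_congr fun x _ => sub_eq_zero)

lemma sum_expBox_addChar_mul_expSum (ψ : AddChar F ℂ) (a g : Fin (n + 1) → Fˣ) (r : ℕ) (t : F) :
    ∑ x ∈ expBox g r, ψ (t * expSum a g x) = ∏ i, ∑ x ∈ range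
      (if i = Fin.last n then r else orderOf (g i)), ψ (t * (a i * g i ^ x)) := by
  rw [prod_univ_sum, expBox]
  refine sum_congr rfl fun x _ => ?_
  rw [expSum, mul_sum, AddChar.map_sum_eq_prod]

variable [Fintype F] [DecidableEq F] {ψ : AddChar F ℂ}

lemma norm_sq_sum_expBox_le (hψ : ψ.IsPrimitive) (a g : Fin (n + 1) → Fˣ) (r : ℕ) {t : F}
    (ht : t ≠ 0) :
    ‖∑ x ∈ expBox g r, ψ (t * expSum a g x)‖ ^ 2 ≤
      Fintype.card F ^ n * ‖∑ x ∈ range r, ψ (t * (a (Fin.last n) * g (Fin.last n) ^ x))‖ ^ 2 := by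
  rw [sum_expBox_addChar_mul_expSum, norm_prod, ← prod_pow, Fin.prod_univ_castSucc, if_pos rfl]
  gcongr
  calc ∏ i : Fin n, ‖∑ x ∈ range (if i.castSucc = Fin.last n then r else orderOf (g i.castSucc)),
        ψ (t * (a i.castSucc * g i.castSucc ^ x))‖ ^ 2
      ≤ ∏ _i : Fin n, (Fintype.card F : ℝ) := by
        gcongr with i
        simp only [if_neg (Fin.castSucc_lt_last i).ne, ← mul_assoc]
        exact AddChar.norm_sq_sum_range_orderOf_le hψ _ (mul_ne_zero ht (a _).ne_zero)
    _ = Fintype.card F ^ n := by simp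

theorem sum_sq_solCount_sub_le (a g : Fin (n + 1) → Fˣ) {r : ℕ}
    (hrs : r ≤ orderOf (g (Fin.last n))) :
    ∑ b, ((solCount a g b r : ℝ) - r * ordProd g / Fintype.card F) ^ 2 ≤
      Fintype.card F ^ n * r := by
  obtain ⟨ψ, hψ⟩ := AddChar.exists_isPrimitive F
  have hq : (0 : ℝ) < Fintype.card F := by exact_mod_cast Fintype.card_pos
  set T : F → ℂ := fun t => ∑ x ∈ range r, ψ (t * (a (Fin.last n) * g (Fin.last n) ^ x))
  have hT : ∑ t, ‖T t‖ ^ 2 = Fintype.card F * r := by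
    rw [AddChar.sum_norm_sq_sum_mulShift_of_injOn hψ, card_range]
    exact (Units.injOn_mul_coe_pow (a _).ne_zero _).mono fun x hx =>
      (mem_range.1 hx).trans_le hrs
  have hvar := AddChar.card_mul_sum_sq_card_fiber_sub hψ (expBox g r) (expSum a g)
  simp only [← solCount_eq_card_filter, card_expBox] at hvar
  refine le_of_mul_le_mul_left ?_ hq
  calc (Fintype.card F : ℝ) * ∑ b, ((solCount a g b r : ℝ) - r * ordProd g / Fintype.card F) ^ 2
      = ∑ t ∈ univ.erase 0, ‖∑ x ∈ expBox g r, ψ (t * expSum a g x)‖ ^ 2 := by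
        rw [← hvar, Nat.cast_mul, mul_comm (ordProd g : ℝ)]
    _ ≤ ∑ t ∈ univ.erase 0, Fintype.card F ^ n * ‖T t‖ ^ 2 :=
        sum_le_sum fun t ht => norm_sq_sum_expBox_le hψ a g r (ne_of_mem_erase ht)
    _ ≤ Fintype.card F ^ n * ∑ t, ‖T t‖ ^ 2 := by
        rw [← mul_sum]; gcongr; exact subset_univ _
    _ = Fintype.card F * (Fintype.card F ^ n * r) := by rw [hT]; ring

end ExpSum

theorem statement0_general
    (F : Type*) [Field F] [Fintype F] [DecidableEq F]
    (n : ℕ)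
    (a g : Fin (n + 1) → Fˣ)
    (δ : ℝ) (hδ : 0 < δ)
    (r : ℕ) (hr1 : 1 ≤ r) (hrs : r ≤ orderOf (g (Fin.last n))) :
    (({b : F |
        δ * Real.sqrt ((r : ℝ) * (Fintype.card F : ℝ) ^ (n - 1)) ≤
          abs ((solCount a g b r : ℝ) -
            (r : ℝ) * (ordProd g : ℝ) / (Fintype.card F : ℝ))}.ncard : ℝ)) ≤
      (Fintype.card F : ℝ) / δ ^ 2 := by
  have hq : (1 : ℝ) ≤ Fintype.card F := by exact_mod_cast Fintype.card_pos
  have hr : (0 : ℝ) < r := by exact_mod_cast hr1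
  refine (ncard_setOf_le_abs_le_sum_sq_div _ (by positivity)).trans ?_
  rw [div_le_div_iff₀ (by positivity) (by positivity), mul_pow, Real.sq_sqrt (by positivity)]
  have hpow : (Fintype.card F : ℝ) ^ n ≤ Fintype.card F * Fintype.card F ^ (n - 1) := by
    rw [← pow_succ']; exact pow_le_pow_right₀ hq (by omega)
  calc (∑ b, ((solCount a g b r : ℝ) - r * ordProd g / Fintype.card F) ^ 2) * δ ^ 2
      ≤ Fintype.card F ^ n * r * δ ^ 2 := by gcongr; exact sum_sq_solCount_sub_le a g hrs
    _ ≤ Fintype.card F * Fintype.card F ^ (n - 1) * r * δ ^ 2 := by gcongr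
    _ = Fintype.card F * (δ ^ 2 * (r * Fintype.card F ^ (n - 1))) := by ring

/-- Let `q = p^ν` and `F` the finite field with `q` elements.  With `n + 1 ≥ 2` variables,
`a i, g i ∈ Fˣ` with orders `s i`, and `P` the product of the first `n` orders:
for every real `δ > 0` and every integer `r` with `1 ≤ r ≤ s_{n+1}`, the number of
elements `b ∈ F` for which `|N_{f_b}(r) − r·P/q| ≥ δ·√(r·q^{(n+1)−2})` is at most
`q/δ²`. -/
theorem statement0 (p ν : ℕ) (hp : p.Prime) (hν : 1 ≤ ν)
    (F : Type*) [Field F] [Fintype F] [DecidableEq F]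
    (hq : Fintype.card F = p ^ ν)
    (n : ℕ) (hn : 1 ≤ n)
    (a g : Fin (n + 1) → Fˣ)
    (δ : ℝ) (hδ : 0 < δ)
    (r : ℕ) (hr1 : 1 ≤ r) (hrs : r ≤ orderOf (g (Fin.last n))) :
    (({b : F |
        δ * Real.sqrt ((r : ℝ) * (Fintype.card F : ℝ) ^ (n - 1)) ≤
          abs ((solCount a g b r : ℝ) -
            (r : ℝ) * (ordProd g : ℝ) / (Fintype.card F : ℝ))}.ncard : ℝ)) ≤
      (Fintype.card F : ℝ) / δ ^ 2 :=
  statement0_general F n a g δ hδ r hr1 hrs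
end

section
/- Let a ∈ F_q^× and let g ∈ F_q^× have multiplicative order s. Then | Σ_{x=0}^{s−1} ψ(a g^{x}) | ≤ √q; equivalently, the absolute value of the sum of ψ over any coset a·⟨g⟩ of the cyclic subgroup generated by g is at most √q. -/
/-!
Put `S(b) = ∑_{h ∈ H} ψ(b h)` for a subgroup `H` of the unit group of a finite ring `R` with
`q = |R|`. Since `ψ` is primitive, the orthogonality relations give the Parseval identity
`∑_b |S(b)|² = q |H|`. On the other hand `S` is constant on each coset `aH`, which has `|H|`
elements, so `|H| |S(a)|² ≤ q |H|`.
-/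

open Finset

namespace AddChar

variable {R : Type*} [CommRing R]

theorem sum_norm_sq_sum_apply_mul [Fintype R] {ψ : AddChar R ℂ} (hψ : ψ.IsPrimitive)
    {ι : Type*} [Fintype ι] {v : ι → R} (hv : Function.Injective v) :
    ∑ b : R, ‖∑ i, ψ (b * v i)‖ ^ 2 = Fintype.card R * Fintype.card ι := by
  classical
  have hexpand (b : R) :
      (‖∑ i, ψ (b * v i)‖ : ℂ) ^ 2 = ∑ i, ∑ j, ψ (b * (v i - v j)) := by
    rw [← Complex.mul_conj', map_sum, sum_mul_sum]
    refine sum_congr rfl fun i _ => sum_congr rfl fun j _ => ?_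
    rw [← map_neg_eq_conj, ← map_add_eq_mul, mul_sub, sub_eq_add_neg]
  have horth (i j : ι) :
      ∑ b : R, ψ (b * (v i - v j)) = if i = j then (Fintype.card R : ℂ) else 0 := by
    rw [sum_mulShift _ hψ, sub_eq_zero, hv.eq_iff, Nat.cast_ite, Nat.cast_zero]
  have hC :
      ((∑ b : R, ‖∑ i, ψ (b * v i)‖ ^ 2 : ℝ) : ℂ) = Fintype.card R * Fintype.card ι :=
    calc ((∑ b : R, ‖∑ i, ψ (b * v i)‖ ^ 2 : ℝ) : ℂ)
        = ∑ b : R, ∑ i, ∑ j, ψ (b * (v i - v j)) := by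
          push_cast
          exact sum_congr rfl fun b _ => hexpand b
      _ = ∑ i, ∑ j, ∑ b : R, ψ (b * (v i - v j)) := by
          rw [sum_comm]
          exact sum_congr rfl fun i _ => sum_comm
      _ = Fintype.card R * Fintype.card ι := by
          simp [horth, mul_comm]
  exact_mod_cast hC

variable (ψ : AddChar R ℂ) (H : Subgroup Rˣ) [Fintype H]

noncomputable def cosetSum (b : R) : ℂ :=
  ∑ h : H, ψ (b * ((h : Rˣ) : R))

theorem cosetSum_mul_mem (b : R) (k : H) :
    cosetSum ψ H (b * ((k : Rˣ) : R)) = cosetSum ψ H b := by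
  refine Eq.trans ?_ (Equiv.sum_comp (Equiv.mulLeft k) _)
  simp only [cosetSum, Equiv.coe_mulLeft, Subgroup.coe_mul, Units.val_mul, mul_assoc]

variable [Fintype R]

theorem sum_norm_sq_cosetSum (hψ : ψ.IsPrimitive) :
    ∑ b : R, ‖cosetSum ψ H b‖ ^ 2 = Fintype.card R * Fintype.card H :=
  sum_norm_sq_sum_apply_mul hψ (Units.val_injective.comp Subtype.val_injective)

theorem norm_cosetSum_le_sqrt (hψ : ψ.IsPrimitive) (a : Rˣ) :
    ‖cosetSum ψ H a‖ ≤ √(Fintype.card R) := by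
  classical
  set f : R → ℝ := fun b => ‖cosetSum ψ H b‖ ^ 2
  have hinj : Function.Injective fun h : H => (a : R) * ((h : Rˣ) : R) :=
    a.isUnit.mul_right_injective.comp (Units.val_injective.comp Subtype.val_injective)
  have hcoset : ∑ h : H, f (a * ((h : Rˣ) : R)) = Fintype.card H * f a := by
    simp [f, cosetSum_mul_mem]
  have hle : ∑ h : H, f (a * ((h : Rˣ) : R)) ≤ ∑ b : R, f b := by
    rw [← sum_image fun x _ y _ hxy => hinj hxy]
    exact sum_le_univ_sum_of_nonneg fun b => by positivity
  have hH : (0 : ℝ) < Fintype.card H := by exact_mod_cast Fintype.card_pos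
  rw [hcoset, sum_norm_sq_cosetSum ψ H hψ, mul_comm (Fintype.card R : ℝ)] at hle
  exact Real.le_sqrt_of_sq_le (le_of_mul_le_mul_left hle hH)

end AddChar

theorem statement6_general
    (F : Type*) [Field F] [Fintype F]
    (ψ : AddChar F ℂ) (hψ : ψ ≠ 1)
    (a g : Fˣ) :
    ‖∑ x ∈ Finset.range (orderOf g), ψ ((a : F) * (g : F) ^ x)‖ ≤
      Real.sqrt (Fintype.card F) := by
  classical
  have hsum : ∑ x ∈ range (orderOf g), ψ ((a : F) * (g : F) ^ x) =
      AddChar.cosetSum ψ (Subgroup.zpowers g) a := by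
    rw [sum_range, AddChar.cosetSum, ← (finEquivZPowers (isOfFinOrder_of_finite g)).sum_comp]
    simp [finEquivZPowers_apply]
  rw [hsum]
  exact AddChar.norm_cosetSum_le_sqrt ψ _ (AddChar.IsPrimitive.of_ne_one hψ) a

/-- Let `F` be the finite field with `q = p^ν` elements, `ψ` a nontrivial additive
character of `F`, `a ∈ Fˣ`, and `g ∈ Fˣ` of multiplicative order `s`.  Then
`|Σ_{x=0}^{s−1} ψ(a·g^x)| ≤ √q`, i.e. the absolute value of the sum of `ψ` over the
coset `a·⟨g⟩` is at most `√q`. -/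
theorem statement6 (p ν : ℕ) (hp : p.Prime) (hν : 1 ≤ ν)
    (F : Type*) [Field F] [Fintype F]
    (hq : Fintype.card F = p ^ ν)
    (ψ : AddChar F ℂ) (hψ : ψ ≠ 1)
    (a g : Fˣ) :
    ‖∑ x ∈ Finset.range (orderOf g), ψ ((a : F) * (g : F) ^ x)‖ ≤
      Real.sqrt (Fintype.card F) :=
  statement6_general F ψ hψ a g
end

section
/- If r ≥ 4 · q^n · P^{-2} · log q and r ≤ s_n (r an integer with r ≥ 1), then the number of elements b ∈ F_q for which N_{f_b}(r) < r·P/(2q) is at most q/log q. -/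
open Finset Complex

section AuxChar

variable {F : Type*} [Field F] [Fintype F] [DecidableEq F] {ψ : AddChar F ℂ}

set_option linter.unusedSectionVars false in
lemma psi_map_sum {ι : Type*} (ψ : AddChar F ℂ) (s : Finset ι) (f : ι → F) :
    ψ (∑ i ∈ s, f i) = ∏ i ∈ s, ψ (f i) := by
  classical
  induction s using Finset.cons_induction with
  | empty => simp
  | cons i s hi ih => rw [Finset.sum_cons, Finset.prod_cons, AddChar.map_add_eq_mul, ih]

lemma aux_parseval (hψ : ψ.IsPrimitive) (L : ℕ) (e : ℕ → F)
    (hinj : ∀ t < L, ∀ t' < L, e t = e t' → t = t') :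
    ∑ u : F, Complex.normSq (∑ t ∈ Finset.range L, ψ (u * e t))
      = (Fintype.card F : ℝ) * L := by
  have hC : (∑ u : F, (Complex.normSq (∑ t ∈ Finset.range L, ψ (u * e t)) : ℂ))
      = ((Fintype.card F : ℝ) * L : ℝ) := by
    have step1 : ∀ u : F,
        (Complex.normSq (∑ t ∈ Finset.range L, ψ (u * e t)) : ℂ)
          = ∑ t ∈ Finset.range L, ∑ t' ∈ Finset.range L, ψ (u * (e t - e t')) := by
      intro u
      rw [← Complex.mul_conj, map_sum, Finset.sum_mul_sum]
      refine Finset.sum_congr rfl fun t _ => Finset.sum_congr rfl fun t' _ => ?_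
      rw [← AddChar.map_neg_eq_conj, ← AddChar.map_add_eq_mul]
      ring_nf
    simp only [step1]
    rw [Finset.sum_comm]
    have step2 : ∀ t ∈ Finset.range L, ∑ u : F, ∑ t' ∈ Finset.range L, ψ (u * (e t - e t'))
        = (Fintype.card F : ℂ) := by
      intro t ht
      rw [Finset.sum_comm]
      have : ∀ t' ∈ Finset.range L, ∑ u : F, ψ (u * (e t - e t'))
          = if t' = t then (Fintype.card F : ℂ) else 0 := by
        intro t' ht'
        rw [AddChar.sum_mulShift _ hψ]
        by_cases h : t' = t
        · subst h; simp
        · have hne : e t - e t' ≠ 0 := sub_ne_zero.mpr fun he =>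
            h ((hinj t (Finset.mem_range.mp ht) t' (Finset.mem_range.mp ht') he).symm)
          simp [h, hne]
      rw [Finset.sum_congr rfl this, Finset.sum_ite_eq' (Finset.range L)]
      simp [ht]
    rw [Finset.sum_congr rfl step2, Finset.sum_const, Finset.card_range]
    push_cast
    ring
  exact_mod_cast hC

lemma aux_complete (hψ : ψ.IsPrimitive) (g : Fˣ) {c : F} (hc : c ≠ 0) :
    Complex.normSq (∑ t ∈ Finset.range (orderOf g), ψ (c * (g : F) ^ t))
      ≤ (Fintype.card F : ℝ) := by
  set s := orderOf g with hs_def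
  have hs : 0 < s := orderOf_pos g
  set W : F → ℝ := fun u => Complex.normSq (∑ t ∈ Finset.range s, ψ (u * (g : F) ^ t))
    with hW_def
  have hgs : (g : F) ^ s = 1 := by
    rw [← Units.val_pow_eq_pow_val, pow_orderOf_eq_one, Units.val_one]
  have hshift : ∀ u : F, W (u * (g : F)) = W u := by
    intro u
    have key : ∑ t ∈ Finset.range s, ψ ((u * (g : F)) * (g : F) ^ t)
        = ∑ t ∈ Finset.range s, ψ (u * (g : F) ^ t) := by
      have h1 : ∀ t, (u * (g : F)) * (g : F) ^ t = u * (g : F) ^ (t + 1) := by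
        intro t; rw [pow_succ]; ring
      simp only [h1]
      have h2 : ∑ t ∈ Finset.range (s + 1), ψ (u * (g : F) ^ t)
          = (∑ t ∈ Finset.range s, ψ (u * (g : F) ^ (t + 1))) + ψ (u * (g : F) ^ 0) :=
        Finset.sum_range_succ' _ s
      have h3 : ∑ t ∈ Finset.range (s + 1), ψ (u * (g : F) ^ t)
          = (∑ t ∈ Finset.range s, ψ (u * (g : F) ^ t)) + ψ (u * (g : F) ^ s) :=
        Finset.sum_range_succ _ s
      have h4 : ψ (u * (g : F) ^ s) = ψ (u * (g : F) ^ 0) := by rw [hgs, pow_zero]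
      have h5 := h2.symm.trans h3
      rw [h4] at h5
      exact add_right_cancel h5
    simp only [hW_def, key]
  have hpow : ∀ j : ℕ, W (c * (g : F) ^ j) = W c := by
    intro j
    induction j with
    | zero => simp
    | succ j ih =>
      have h : c * (g : F) ^ (j + 1) = (c * (g : F) ^ j) * (g : F) := by rw [pow_succ]; ring
      rw [h, hshift, ih]
  have hinj : Set.InjOn (fun j : ℕ => c * (g : F) ^ j) (Finset.range s) := by
    intro j hj j' hj' h
    simp only at h
    have h2 : (g : F) ^ j = (g : F) ^ j' := mul_left_cancel₀ hc h
    have h3 : (g : Fˣ) ^ j = (g : Fˣ) ^ j' := Units.ext (by push_cast; exact h2)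
    exact pow_injOn_Iio_orderOf (by simpa using Finset.mem_range.mp (by simpa using hj))
      (by simpa using Finset.mem_range.mp (by simpa using hj')) h3
  have hsum : ∑ u : F, W u = (Fintype.card F : ℝ) * s := by
    apply aux_parseval hψ
    intro t ht t' ht' h
    have h3 : (g : Fˣ) ^ t = (g : Fˣ) ^ t' := Units.ext (by push_cast; exact h)
    exact pow_injOn_Iio_orderOf (Set.mem_Iio.mpr ht) (Set.mem_Iio.mpr ht') h3
  have himg : ∑ j ∈ Finset.range s, W (c * (g : F) ^ j) ≤ ∑ u : F, W u := by
    rw [← Finset.sum_image (fun x hx y hy h => hinj hx hy h)]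
    exact Finset.sum_le_sum_of_subset_of_nonneg (Finset.subset_univ _)
      (fun _ _ _ => Complex.normSq_nonneg _)
  have hconst : ∑ j ∈ Finset.range s, W (c * (g : F) ^ j) = s * W c := by
    rw [Finset.sum_congr rfl fun j _ => hpow j, Finset.sum_const, Finset.card_range,
      nsmul_eq_mul]
  rw [hconst, hsum] at himg
  have hWc : Complex.normSq (∑ t ∈ Finset.range s, ψ (c * (g : F) ^ t)) = W c := rfl
  rw [hWc]
  have hs' : (0 : ℝ) < s := by exact_mod_cast hs
  nlinarith [himg, hs']

end AuxChar



set_option maxHeartbeats 1000000 in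
/-- If `r ≥ 4 · q^{n+1} · P⁻² · log q` and `1 ≤ r ≤ s_{n+1}`, then the number of elements
`b ∈ F` for which `N_{f_b}(r) < r·P/(2q)` is at most `q / log q`. -/

theorem statement7 (p ν : ℕ) (hp : p.Prime) (hν : 1 ≤ ν)
    (F : Type*) [Field F] [Fintype F] [DecidableEq F]
    (hq : Fintype.card F = p ^ ν)
    (n : ℕ) (hn : 1 ≤ n)
    (a g : Fin (n + 1) → Fˣ)
    (r : ℕ) (hr1 : 1 ≤ r)
    (hr : 4 * (Fintype.card F : ℝ) ^ (n + 1) / (ordProd g : ℝ) ^ 2 *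
        Real.log (Fintype.card F) ≤ (r : ℝ))
    (hrs : r ≤ orderOf (g (Fin.last n))) :
    (({b : F | (solCount a g b r : ℝ) <
        (r : ℝ) * (ordProd g : ℝ) / (2 * (Fintype.card F : ℝ))}.ncard : ℝ)) ≤
      (Fintype.card F : ℝ) / Real.log (Fintype.card F) := by
  classical
  set ψ : AddChar F ℂ := AddChar.FiniteField.primitiveChar_to_Complex F with hψ_def
  have hψ : ψ.IsPrimitive := AddChar.FiniteField.primitiveChar_to_Complex_isPrimitive F
  set q : ℕ := Fintype.card F with hq_def
  have hq2 : 2 ≤ q := by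
    rw [hq]
    calc 2 ≤ p := hp.two_le
    _ = p ^ 1 := (pow_one p).symm
    _ ≤ p ^ ν := Nat.pow_le_pow_right (le_trans one_le_two hp.two_le) hν
  have hQ0 : (0 : ℝ) < q := by
    have : 0 < q := lt_of_lt_of_le Nat.zero_lt_two hq2
    exact_mod_cast this
  have hlogq : 0 < Real.log q := Real.log_pos (by exact_mod_cast lt_of_lt_of_le Nat.one_lt_two hq2)
  set P : ℕ := ordProd g with hP_def
  have hPpos : 0 < P := Finset.prod_pos fun i _ => orderOf_pos _
  have hP0 : (0 : ℝ) < P := by exact_mod_cast hPpos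
  have hR0 : (0 : ℝ) < r := by exact_mod_cast hr1
  set L : Fin (n + 1) → ℕ := fun i => if i = Fin.last n then r else orderOf (g i) with hL_def
  have hLlast : L (Fin.last n) = r := by rw [hL_def]; simp
  have hLcast : ∀ i : Fin n, L i.castSucc = orderOf (g i.castSucc) := by
    intro i; rw [hL_def]; simp only [if_neg (Fin.castSucc_lt_last i).ne]
  have hbox : expBox g r = Fintype.piFinset fun i => Finset.range (L i) := rfl
  have hboxcard : (expBox g r).card = P * r := by
    rw [hbox, Fintype.card_piFinset]
    simp only [Finset.card_range]
    rw [Fin.prod_univ_castSucc, hLlast, hP_def]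
    congr 1
    exact Finset.prod_congr rfl fun i _ => hLcast i
  set Fm : (Fin (n + 1) → ℕ) → F := fun x => ∑ i, (a i : F) * (g i : F) ^ x i with hFm_def
  have hNdef : ∀ b : F, solCount a g b r = ((expBox g r).filter fun x => Fm x = b).card := by
    intro b
    unfold solCount solSet
    congr 1
    apply Finset.filter_congr
    intro x _
    rw [hFm_def]
    simp [expPoly, sub_eq_zero]
  set S : Fin (n + 1) → F → ℂ :=
    fun i c => ∑ t ∈ Finset.range (L i), ψ (c * ((a i : F) * (g i : F) ^ t)) with hS_def
  set T : F → ℂ := fun c => ∑ x ∈ expBox g r, ψ (c * Fm x) with hT_def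
  have hTfact : ∀ c : F, T c = ∏ i, S i c := by
    intro c
    rw [hT_def, hS_def]
    simp only
    rw [Finset.prod_univ_sum]
    apply Finset.sum_congr rfl
    intro x _
    rw [hFm_def]
    simp only
    rw [Finset.mul_sum, psi_map_sum]
  have hT0 : T 0 = ((P * r : ℕ) : ℂ) := by
    rw [hT_def]
    simp only [zero_mul, AddChar.map_zero_eq_one]
    rw [Finset.sum_const, hboxcard]
    simp
  set E : Finset F := Finset.univ.erase 0 with hE_def
  have hkey : ∀ b : F, ∑ c ∈ E, ψ (-(c * b)) * T c
      = (q : ℂ) * (solCount a g b r : ℂ) - ((P * r : ℕ) : ℂ) := by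
    intro b
    have h1 : ∑ c : F, ψ (-(c * b)) * T c = (q : ℂ) * (solCount a g b r : ℂ) := by
      calc ∑ c : F, ψ (-(c * b)) * T c
          = ∑ c : F, ∑ x ∈ expBox g r, ψ (c * (Fm x - b)) := by
            apply Finset.sum_congr rfl
            intro c _
            rw [hT_def]
            simp only
            rw [Finset.mul_sum]
            apply Finset.sum_congr rfl
            intro x _
            rw [← AddChar.map_add_eq_mul]
            congr 1
            ring
        _ = ∑ x ∈ expBox g r, ∑ c : F, ψ (c * (Fm x - b)) := Finset.sum_comm
        _ = ∑ x ∈ expBox g r, if Fm x - b = 0 then (q : ℂ) else 0 := by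
            apply Finset.sum_congr rfl
            intro x _
            rw [AddChar.sum_mulShift _ hψ]
            split_ifs <;> simp [hq_def]
        _ = ∑ x ∈ expBox g r, if Fm x = b then (q : ℂ) else 0 := by
            apply Finset.sum_congr rfl
            intro x _
            simp [sub_eq_zero]
        _ = ((expBox g r).filter fun x => Fm x = b).card * (q : ℂ) := by
            rw [← Finset.sum_filter, Finset.sum_const, nsmul_eq_mul]
        _ = (q : ℂ) * (solCount a g b r : ℂ) := by rw [← hNdef b]; ring
    have h2 : ψ (-((0 : F) * b)) * T 0 + ∑ c ∈ E, ψ (-(c * b)) * T c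
        = ∑ c : F, ψ (-(c * b)) * T c := by
      rw [hE_def]
      exact Finset.add_sum_erase Finset.univ (fun c => ψ (-(c * b)) * T c) (Finset.mem_univ 0)
    have h3 : ψ (-((0 : F) * b)) * T 0 = ((P * r : ℕ) : ℂ) := by
      rw [hT0]; simp
    rw [h3] at h2
    rw [h1] at h2
    linear_combination h2
  -- orthogonality of the deviations
  have hvarC : ∑ b : F, ((∑ c ∈ E, ψ (-(c * b)) * T c) *
      (starRingEnd ℂ) (∑ c ∈ E, ψ (-(c * b)) * T c))
      = (q : ℂ) * ∑ c ∈ E, T c * (starRingEnd ℂ) (T c) := by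
    calc ∑ b : F, ((∑ c ∈ E, ψ (-(c * b)) * T c) * (starRingEnd ℂ) (∑ c ∈ E, ψ (-(c * b)) * T c))
        = ∑ b : F, ∑ c ∈ E, ∑ c' ∈ E,
            (T c * (starRingEnd ℂ) (T c')) * ψ (b * (c' - c)) := by
          apply Finset.sum_congr rfl
          intro b _
          rw [map_sum, Finset.sum_mul_sum]
          apply Finset.sum_congr rfl
          intro c _
          apply Finset.sum_congr rfl
          intro c' _
          rw [map_mul, ← AddChar.map_neg_eq_conj, neg_neg]
          have h : ψ (-(c * b)) * ψ (c' * b) = ψ (b * (c' - c)) := by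
            rw [← AddChar.map_add_eq_mul]
            congr 1
            ring
          calc ψ (-(c * b)) * T c * (ψ (c' * b) * (starRingEnd ℂ) (T c'))
              = (T c * (starRingEnd ℂ) (T c')) * (ψ (-(c * b)) * ψ (c' * b)) := by ring
            _ = (T c * (starRingEnd ℂ) (T c')) * ψ (b * (c' - c)) := by rw [h]
      _ = ∑ c ∈ E, ∑ c' ∈ E, (T c * (starRingEnd ℂ) (T c')) * ∑ b : F, ψ (b * (c' - c)) := by
          rw [Finset.sum_comm]
          apply Finset.sum_congr rfl
          intro c _
          rw [Finset.sum_comm]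
          apply Finset.sum_congr rfl
          intro c' _
          rw [← Finset.mul_sum]
      _ = ∑ c ∈ E, (T c * (starRingEnd ℂ) (T c)) * (q : ℂ) := by
          apply Finset.sum_congr rfl
          intro c hc
          have hstep : ∀ c' ∈ E, (T c * (starRingEnd ℂ) (T c')) * ∑ b : F, ψ (b * (c' - c))
              = if c' = c then (T c * (starRingEnd ℂ) (T c)) * (q : ℂ) else 0 := by
            intro c' _
            rw [AddChar.sum_mulShift _ hψ]
            by_cases h : c' = c
            · subst h; simp [hq_def]
            · have hne : c' - c ≠ 0 := sub_ne_zero.mpr h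
              simp [h, hne]
          rw [Finset.sum_congr rfl hstep, Finset.sum_ite_eq' E]
          simp [hc]
      _ = (q : ℂ) * ∑ c ∈ E, T c * (starRingEnd ℂ) (T c) := by
          rw [Finset.mul_sum]
          apply Finset.sum_congr rfl
          intros
          ring
  -- real version of the variance identity
  have hUreal : ∀ b : F, ∑ c ∈ E, ψ (-(c * b)) * T c
      = (((q : ℝ) * (solCount a g b r : ℝ) - ((P : ℝ) * r) : ℝ) : ℂ) := by
    intro b
    rw [hkey b]
    push_cast
    ring
  have hvarR : ∑ b : F, ((q : ℝ) * (solCount a g b r : ℝ) - (P : ℝ) * r) ^ 2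
      = (q : ℝ) * ∑ c ∈ E, Complex.normSq (T c) := by
    have e1 : ∀ b : F, ((q : ℝ) * (solCount a g b r : ℝ) - (P : ℝ) * r) ^ 2
        = Complex.normSq (∑ c ∈ E, ψ (-(c * b)) * T c) := by
      intro b
      rw [hUreal b, Complex.normSq_ofReal]
      ring
    have e2 : ∑ b : F, Complex.normSq (∑ c ∈ E, ψ (-(c * b)) * T c)
        = (q : ℝ) * ∑ c ∈ E, Complex.normSq (T c) := by
      have hC : ((∑ b : F, Complex.normSq (∑ c ∈ E, ψ (-(c * b)) * T c) : ℝ) : ℂ)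
          = (((q : ℝ) * ∑ c ∈ E, Complex.normSq (T c) : ℝ) : ℂ) := by
        push_cast
        calc ∑ b : F, (Complex.normSq (∑ c ∈ E, ψ (-(c * b)) * T c) : ℂ)
            = ∑ b : F, ((∑ c ∈ E, ψ (-(c * b)) * T c) *
                (starRingEnd ℂ) (∑ c ∈ E, ψ (-(c * b)) * T c)) :=
              Finset.sum_congr rfl fun b _ => (Complex.mul_conj _).symm
          _ = (q : ℂ) * ∑ c ∈ E, T c * (starRingEnd ℂ) (T c) := hvarC
          _ = (q : ℂ) * ∑ c ∈ E, (Complex.normSq (T c) : ℂ) := by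
              rw [Finset.sum_congr rfl fun c _ => Complex.mul_conj (T c)]
      exact_mod_cast hC
    rw [Finset.sum_congr rfl fun b _ => e1 b, e2]
  -- bound the character sums
  have hbound : ∀ c ∈ E, Complex.normSq (T c)
      ≤ (q : ℝ) ^ n * Complex.normSq (S (Fin.last n) c) := by
    intro c hc
    have hc0 : c ≠ 0 := (Finset.mem_erase.mp hc).1
    rw [hTfact c]
    rw [show Complex.normSq (∏ i, S i c) = ∏ i, Complex.normSq (S i c) from
      map_prod Complex.normSq _ _]
    rw [Fin.prod_univ_castSucc]
    apply mul_le_mul_of_nonneg_right _ (Complex.normSq_nonneg _)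
    calc ∏ i : Fin n, Complex.normSq (S i.castSucc c)
        ≤ ∏ _i : Fin n, (q : ℝ) := by
          apply Finset.prod_le_prod (fun i _ => Complex.normSq_nonneg _)
          intro i _
          rw [hS_def]
          simp only
          rw [hLcast i]
          have harg : ∀ t : ℕ, c * ((a i.castSucc : F) * (g i.castSucc : F) ^ t)
              = (c * (a i.castSucc : F)) * (g i.castSucc : F) ^ t := by
            intro t; ring
          simp only [harg]
          rw [hq_def]
          exact aux_complete hψ _ (mul_ne_zero hc0 (Units.ne_zero _))
      _ = (q : ℝ) ^ n := by rw [Finset.prod_const, Finset.card_univ, Fintype.card_fin]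
  have hlastsum : ∑ c ∈ E, Complex.normSq (S (Fin.last n) c) ≤ (q : ℝ) * r := by
    have h1 : ∑ c : F, Complex.normSq (S (Fin.last n) c) = (q : ℝ) * r := by
      rw [hS_def]
      simp only [hLlast]
      rw [hq_def]
      apply aux_parseval hψ r (fun t => (a (Fin.last n) : F) * (g (Fin.last n) : F) ^ t)
      intro t ht t' ht' h
      have h2 : (g (Fin.last n) : F) ^ t = (g (Fin.last n) : F) ^ t' :=
        mul_left_cancel₀ (Units.ne_zero _) h
      have h3 : (g (Fin.last n)) ^ t = (g (Fin.last n)) ^ t' := Units.ext (by push_cast; exact h2)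
      exact pow_injOn_Iio_orderOf (Set.mem_Iio.mpr (lt_of_lt_of_le ht hrs))
        (Set.mem_Iio.mpr (lt_of_lt_of_le ht' hrs)) h3
    rw [← h1]
    exact Finset.sum_le_sum_of_subset_of_nonneg (Finset.subset_univ _)
      (fun _ _ _ => Complex.normSq_nonneg _)
  have hVbound : ∑ b : F, ((q : ℝ) * (solCount a g b r : ℝ) - (P : ℝ) * r) ^ 2
      ≤ (q : ℝ) ^ (n + 2) * r := by
    rw [hvarR]
    calc (q : ℝ) * ∑ c ∈ E, Complex.normSq (T c)
        ≤ (q : ℝ) * ∑ c ∈ E, (q : ℝ) ^ n * Complex.normSq (S (Fin.last n) c) := by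
          apply mul_le_mul_of_nonneg_left _ hQ0.le
          exact Finset.sum_le_sum hbound
      _ = (q : ℝ) * ((q : ℝ) ^ n * ∑ c ∈ E, Complex.normSq (S (Fin.last n) c)) := by
          simp only [Finset.mul_sum]
      _ ≤ (q : ℝ) * ((q : ℝ) ^ n * ((q : ℝ) * r)) := by
          apply mul_le_mul_of_nonneg_left _ hQ0.le
          exact mul_le_mul_of_nonneg_left hlastsum (by positivity)
      _ = (q : ℝ) ^ (n + 2) * r := by ring
  -- Chebyshev
  set Bad : Finset F :=
    Finset.univ.filter (fun b => (solCount a g b r : ℝ) < (r : ℝ) * (P : ℝ) / (2 * (q : ℝ)))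
    with hBad_def
  have hset : {b : F | (solCount a g b r : ℝ) < (r : ℝ) * (P : ℝ) / (2 * (q : ℝ))}
      = (↑Bad : Set F) := by
    ext b
    simp [hBad_def]
  rw [hset, Set.ncard_coe_finset]
  have hdev : ∀ b ∈ Bad, ((P : ℝ) * r / 2) ^ 2
      ≤ ((q : ℝ) * (solCount a g b r : ℝ) - (P : ℝ) * r) ^ 2 := by
    intro b hb
    have hb' : (solCount a g b r : ℝ) < (r : ℝ) * (P : ℝ) / (2 * (q : ℝ)) :=
      (Finset.mem_filter.mp hb).2
    rw [lt_div_iff₀ (by positivity)] at hb'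
    generalize hx : (solCount a g b r : ℝ) = x at hb' ⊢
    have h2 : 0 ≤ (P : ℝ) * r / 2 - (q : ℝ) * x := by nlinarith
    have h3 : (0 : ℝ) ≤ (P : ℝ) * r := by positivity
    nlinarith [sq_nonneg ((P : ℝ) * r / 2 - (q : ℝ) * x), mul_nonneg h2 h3]
  have hcard : (Bad.card : ℝ) * ((P : ℝ) * r / 2) ^ 2 ≤ (q : ℝ) ^ (n + 2) * r := by
    calc (Bad.card : ℝ) * ((P : ℝ) * r / 2) ^ 2
        = ∑ _b ∈ Bad, ((P : ℝ) * r / 2) ^ 2 := by rw [Finset.sum_const, nsmul_eq_mul]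
      _ ≤ ∑ b ∈ Bad, ((q : ℝ) * (solCount a g b r : ℝ) - (P : ℝ) * r) ^ 2 :=
          Finset.sum_le_sum hdev
      _ ≤ ∑ b : F, ((q : ℝ) * (solCount a g b r : ℝ) - (P : ℝ) * r) ^ 2 :=
          Finset.sum_le_sum_of_subset_of_nonneg (Finset.subset_univ _)
            (fun _ _ _ => sq_nonneg _)
      _ ≤ (q : ℝ) ^ (n + 2) * r := hVbound
  -- final arithmetic
  have hr' : 4 * (q : ℝ) ^ (n + 1) * Real.log q ≤ (r : ℝ) * (P : ℝ) ^ 2 := by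
    have hP2 : (0 : ℝ) < (P : ℝ) ^ 2 := by positivity
    rw [div_mul_eq_mul_div, div_le_iff₀ hP2] at hr
    linarith
  rw [le_div_iff₀ hlogq]
  have hX : (0 : ℝ) < ((P : ℝ) * r / 2) ^ 2 := by positivity
  have h1 : (Bad.card : ℝ) * ((P : ℝ) * r / 2) ^ 2 * Real.log q
      ≤ (q : ℝ) ^ (n + 2) * r * Real.log q :=
    mul_le_mul_of_nonneg_right hcard hlogq.le
  have h2 : (q : ℝ) ^ (n + 2) * r * Real.log q ≤ (q : ℝ) * ((P : ℝ) * r / 2) ^ 2 := by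
    have hmul := mul_le_mul_of_nonneg_right hr'
      (show (0 : ℝ) ≤ (r : ℝ) * (q : ℝ) / 4 by positivity)
    have hpow : (q : ℝ) ^ (n + 2) = (q : ℝ) ^ (n + 1) * (q : ℝ) := by ring
    rw [hpow]
    nlinarith [hmul]
  nlinarith [h1, h2, hX]
end

section
/- Assume P² · s_n > q^n · log q. Then the number of elements b ∈ F_q for which the equation a_1 g_1^{x_1} + ⋯ + a_n g_n^{x_n} = b has no solution with 0 ≤ x_i < s_i for all i is at most q/log q. -/
/-!
Let `X` be the box of exponent tuples and `v x = ∑ aᵢ gᵢ^{xᵢ}`. By Cauchy–Schwarz over the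
fibres of `v`, `|X|² ≤ |v(X)| · N`, where `N` counts the pairs `x, y ∈ X` with `v x = v y`, and
orthogonality of a primitive additive character `ψ` gives `q N = ∑_b |∑_{x ∈ X} ψ(b v x)|²`.
The inner sum factors into Gauss periods `ηᵢ(b aᵢ)` of the cyclic groups `⟨gᵢ⟩`. Since `ηᵢ` is
constant on the cosets `c⟨gᵢ⟩` and `∑_c |ηᵢ(c)|² = q sᵢ`, we have `|ηᵢ(c)|² ≤ q` for `c ≠ 0`;
bounding all factors but the last one pointwise yields `q N ≤ |X|² + q^{n+1} s_{n+1}`. Hence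
`q - |v(X)| ≤ q^{n+2} s_{n+1} / |X|²`, and `|X| = P s_{n+1}` turns the hypothesis into the
bound `q / log q`.
-/

open Finset

theorem AddChar.map_sum_eq_prod_s8 {A M ι : Type*} [AddCommMonoid A] [CommMonoid M]
    (ψ : AddChar A M) (s : Finset ι) (f : ι → A) : ψ (∑ i ∈ s, f i) = ∏ i ∈ s, ψ (f i) := by
  classical
  induction s using Finset.induction_on with
  | empty => simp
  | insert _ _ hi ih => rw [sum_insert hi, prod_insert hi, AddChar.map_add_eq_mul, ih]

section Collisions

variable {ι β : Type*} [DecidableEq β] (X : Finset ι) (v : ι → β)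

def collisionCount : ℕ := #{p ∈ X ×ˢ X | v p.1 = v p.2}

theorem collisionCount_eq_sum_sq :
    collisionCount X v = ∑ c ∈ X.image v, #{x ∈ X | v x = c} ^ 2 := by
  rw [collisionCount, card_eq_sum_card_fiberwise (f := fun p => v p.1) (t := X.image v)
    fun p hp => mem_image_of_mem v (mem_product.1 (mem_filter.1 hp).1).1]
  refine sum_congr rfl fun c _ => ?_
  rw [sq, ← card_product, ← filter_product]
  congr 1
  ext p
  simp only [mem_filter]
  constructor
  · rintro ⟨⟨hp, hv⟩, rfl⟩
    exact ⟨hp, rfl, hv.symm⟩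
  · rintro ⟨hp, h1, h2⟩
    exact ⟨⟨hp, h1.trans h2.symm⟩, h1⟩

theorem card_sq_le_card_image_mul_collisionCount :
    #X ^ 2 ≤ #(X.image v) * collisionCount X v := by
  rw [collisionCount_eq_sum_sq, card_eq_sum_card_fiberwise fun x hx => mem_image_of_mem v hx]
  exact sq_sum_le_card_mul_sum_sq

end Collisions

section Parseval

variable {R ι : Type*} [CommRing R] [Fintype R] [DecidableEq R] {ψ : AddChar R ℂ}

theorem sum_norm_sq_charSum (hψ : ψ.IsPrimitive) (X : Finset ι) (v : ι → R) :
    ∑ b, ‖∑ x ∈ X, ψ (b * v x)‖ ^ 2 = Fintype.card R * (collisionCount X v : ℝ) := by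
  apply Complex.ofReal_injective
  push_cast
  calc ∑ b, ((‖∑ x ∈ X, ψ (b * v x)‖ : ℂ)) ^ 2
      = ∑ b, ∑ p ∈ X ×ˢ X, ψ (b * (v p.1 - v p.2)) := by
        refine sum_congr rfl fun b _ => ?_
        rw [← Complex.mul_conj', map_sum, sum_mul_sum, sum_product]
        refine sum_congr rfl fun x _ => sum_congr rfl fun y _ => ?_
        rw [← AddChar.map_neg_eq_conj, ← AddChar.map_add_eq_mul]
        ring_nf
    _ = ∑ p ∈ X ×ˢ X, if v p.1 = v p.2 then (Fintype.card R : ℂ) else 0 := by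
        rw [sum_comm]
        refine sum_congr rfl fun p _ => ?_
        rw [AddChar.sum_mulShift _ hψ]
        simp [sub_eq_zero]
    _ = Fintype.card R * (collisionCount X v : ℂ) := by
        rw [← sum_filter, sum_const, nsmul_eq_mul, mul_comm, collisionCount]

theorem card_mul_card_sq_le (hψ : ψ.IsPrimitive) (X : Finset ι) (v : ι → R) :
    Fintype.card R * (#X : ℝ) ^ 2 ≤
      #(X.image v) * ((#X : ℝ) ^ 2 + ∑ b ∈ univ.erase 0, ‖∑ x ∈ X, ψ (b * v x)‖ ^ 2) := by
  have hzero : ‖∑ x ∈ X, ψ (0 * v x)‖ ^ 2 = (#X : ℝ) ^ 2 := by simp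
  have hparseval := sum_norm_sq_charSum hψ X v
  rw [← sum_erase_add _ _ (mem_univ 0), hzero] at hparseval
  have hcs : ((#X ^ 2 : ℕ) : ℝ) ≤ ((#(X.image v) * collisionCount X v : ℕ) : ℝ) :=
    Nat.cast_le.2 (card_sq_le_card_image_mul_collisionCount X v)
  push_cast at hcs
  calc Fintype.card R * (#X : ℝ) ^ 2
      ≤ #(X.image v) * (Fintype.card R * (collisionCount X v : ℝ)) := by
        rw [mul_left_comm]; gcongr
    _ = _ := by rw [← hparseval, add_comm]

theorem card_sub_card_image_le_div (hψ : ψ.IsPrimitive) (X : Finset ι) (v : ι → R) {B L : ℝ}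
    (hE : ∑ b ∈ univ.erase 0, ‖∑ x ∈ X, ψ (b * v x)‖ ^ 2 ≤ B) (hL : 0 < L)
    (hA : B * L < (#X : ℝ) ^ 2) :
    (Fintype.card R : ℝ) - #(X.image v) ≤ Fintype.card R / L := by
  have hmain := card_mul_card_sq_le hψ X v
  have hE₀ : 0 ≤ ∑ b ∈ univ.erase 0, ‖∑ x ∈ X, ψ (b * v x)‖ ^ 2 :=
    sum_nonneg fun _ _ => by positivity
  have hG : (#(X.image v) : ℝ) ≤ Fintype.card R := by exact_mod_cast card_le_univ _
  have hX : 0 < (#X : ℝ) ^ 2 := by nlinarith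
  have hmissed : ((Fintype.card R : ℝ) - #(X.image v)) * (#X : ℝ) ^ 2 ≤ Fintype.card R * B := by
    nlinarith [mul_le_mul hG hE hE₀ (Nat.cast_nonneg (Fintype.card R))]
  rw [le_div_iff₀ hL]
  refine le_of_mul_le_mul_right ?_ hX
  nlinarith [mul_le_mul_of_nonneg_left hA.le (Nat.cast_nonneg (α := ℝ) (Fintype.card R))]

end Parseval

section GaussPeriod

variable {F : Type*} [Field F] {ψ : AddChar F ℂ}

variable (ψ) in
noncomputable def gaussPeriod (h : Fˣ) (c : F) : ℂ :=
  ∑ k ∈ range (orderOf h), ψ (c * h ^ k)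

theorem gaussPeriod_mul (h : Fˣ) (c : F) : gaussPeriod ψ h (c * h) = gaussPeriod ψ h c := by
  let e : ℕ → ℂ := fun k => ψ (c * h ^ k)
  have hperiod : e (orderOf h) = e 0 := by
    simp only [e, ← Units.val_pow_eq_pow_val, pow_orderOf_eq_one, Units.val_one, pow_zero]
  have hshift : gaussPeriod ψ h (c * h) = ∑ k ∈ range (orderOf h), e (k + 1) :=
    sum_congr rfl fun k _ => by simp only [e, pow_succ, mul_assoc, mul_comm (h : F)]
  rw [hshift, gaussPeriod, ← add_left_inj (e 0), ← sum_range_succ', sum_range_succ, hperiod]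

theorem gaussPeriod_mul_pow (h : Fˣ) (c : F) (k : ℕ) :
    gaussPeriod ψ h (c * h ^ k) = gaussPeriod ψ h c := by
  induction k with
  | zero => simp
  | succ k ih => rw [pow_succ, ← mul_assoc, gaussPeriod_mul, ih]

theorem sum_norm_sq_gaussPeriod [Fintype F] (hψ : ψ.IsPrimitive) (h : Fˣ) :
    ∑ c, ‖gaussPeriod ψ h c‖ ^ 2 = Fintype.card F * (orderOf h : ℝ) := by
  classical
  have hdiag : collisionCount (range (orderOf h)) (fun k => (h : F) ^ k) = orderOf h := by
    refine (congrArg card ?_).trans ((diag_card _).trans (card_range _))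
    ext ⟨k, l⟩
    simp only [mem_filter, mem_product, mem_diag, mem_range]
    constructor
    · rintro ⟨⟨hk, hl⟩, hkl⟩
      refine ⟨hk, pow_injOn_Iio_orderOf hk hl (Units.ext ?_)⟩
      simpa using hkl
    · rintro ⟨hk, rfl⟩
      exact ⟨⟨hk, hk⟩, rfl⟩
  rw [← hdiag]
  exact sum_norm_sq_charSum hψ _ _

theorem norm_sq_gaussPeriod_le [Fintype F] (hψ : ψ.IsPrimitive) (h : Fˣ) {c : F} (hc : c ≠ 0) :
    ‖gaussPeriod ψ h c‖ ^ 2 ≤ Fintype.card F := by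
  classical
  have horbit : Set.InjOn (fun k => c * (h : F) ^ k) (range (orderOf h)) := by
    intro k hk l hl hkl
    refine pow_injOn_Iio_orderOf (mem_range.1 hk) (mem_range.1 hl) (Units.ext ?_)
    simpa using mul_left_cancel₀ hc hkl
  have hsum : (orderOf h : ℝ) * ‖gaussPeriod ψ h c‖ ^ 2 ≤ Fintype.card F * orderOf h :=
    calc (orderOf h : ℝ) * ‖gaussPeriod ψ h c‖ ^ 2
        = ∑ c' ∈ (range (orderOf h)).image (fun k => c * (h : F) ^ k),
            ‖gaussPeriod ψ h c'‖ ^ 2 := by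
          rw [sum_image horbit]
          simp [gaussPeriod_mul_pow]
      _ ≤ ∑ c', ‖gaussPeriod ψ h c'‖ ^ 2 :=
          sum_le_sum_of_subset_of_nonneg (subset_univ _) fun _ _ _ => by positivity
      _ = Fintype.card F * orderOf h := sum_norm_sq_gaussPeriod hψ h
  rw [mul_comm (Fintype.card F : ℝ)] at hsum
  exact le_of_mul_le_mul_left hsum (by exact_mod_cast orderOf_pos h)

end GaussPeriod

section Box

variable {F : Type*} [Field F] {ψ : AddChar F ℂ}

theorem sum_piFinset_eq_prod_gaussPeriod {ι : Type*} [Fintype ι] [DecidableEq ι]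
    (a g : ι → Fˣ) (b : F) :
    ∑ x ∈ Fintype.piFinset (fun i => range (orderOf (g i))),
        ψ (b * ∑ i, (a i : F) * (g i : F) ^ x i) =
      ∏ i, gaussPeriod ψ (g i) (b * a i) := by
  simp only [gaussPeriod]
  rw [prod_univ_sum]
  refine sum_congr rfl fun x _ => ?_
  rw [mul_sum, AddChar.map_sum_eq_prod_s8]
  exact prod_congr rfl fun i _ => by rw [mul_assoc]

theorem sum_norm_sq_prod_gaussPeriod_le [Fintype F] [DecidableEq F] (hψ : ψ.IsPrimitive)
    {n : ℕ} (a g : Fin (n + 1) → Fˣ) :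
    ∑ b ∈ univ.erase 0, ‖∏ i, gaussPeriod ψ (g i) (b * a i)‖ ^ 2 ≤
      Fintype.card F ^ (n + 1) * (orderOf (g (Fin.last n)) : ℝ) := by
  set q : ℝ := (Fintype.card F : ℝ)
  set W : F → ℂ := fun b => gaussPeriod ψ (g (Fin.last n)) (b * a (Fin.last n))
  have hpoint : ∀ b ∈ univ.erase (0 : F),
      ‖∏ i, gaussPeriod ψ (g i) (b * a i)‖ ^ 2 ≤ q ^ n * ‖W b‖ ^ 2 := by
    intro b hb
    have hb : b ≠ 0 := ne_of_mem_erase hb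
    rw [norm_prod, ← prod_pow, Fin.prod_univ_castSucc]
    gcongr
    calc ∏ i : Fin n, ‖gaussPeriod ψ (g i.castSucc) (b * a i.castSucc)‖ ^ 2
        ≤ ∏ _i : Fin n, q :=
          prod_le_prod (fun _ _ => by positivity) fun i _ =>
            norm_sq_gaussPeriod_le hψ _ (mul_ne_zero hb (Units.ne_zero _))
      _ = q ^ n := by rw [prod_const, card_univ, Fintype.card_fin]
  have hW : ∑ b, ‖W b‖ ^ 2 = q * orderOf (g (Fin.last n)) := by
    rw [← sum_norm_sq_gaussPeriod hψ (g (Fin.last n))]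
    exact Fintype.sum_equiv (Equiv.mulRight₀ _ (Units.ne_zero (a (Fin.last n)))) _ _
      fun _ => rfl
  calc ∑ b ∈ univ.erase 0, ‖∏ i, gaussPeriod ψ (g i) (b * a i)‖ ^ 2
      ≤ ∑ b ∈ univ.erase 0, q ^ n * ‖W b‖ ^ 2 := sum_le_sum hpoint
    _ ≤ q ^ n * ∑ b, ‖W b‖ ^ 2 := by
        rw [← mul_sum]
        gcongr
        exact subset_univ _
    _ = q ^ (n + 1) * orderOf (g (Fin.last n)) := by rw [hW, pow_succ, mul_assoc]

end Box

theorem statement8_general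
    (F : Type*) [Field F] [Fintype F]
    (n : ℕ)
    (a g : Fin (n + 1) → Fˣ)
    (h : (ordProd g : ℝ) ^ 2 * (orderOf (g (Fin.last n)) : ℝ) >
        (Fintype.card F : ℝ) ^ (n + 1) * Real.log (Fintype.card F)) :
    (({b : F | ¬ ∃ x : Fin (n + 1) → ℕ, (∀ i, x i < orderOf (g i)) ∧
        ∑ i, (a i : F) * (g i : F) ^ x i = b}.ncard : ℝ)) ≤
      (Fintype.card F : ℝ) / Real.log (Fintype.card F) := by
  classical
  set q := Fintype.card F
  set s := orderOf (g (Fin.last n))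
  set ψ := AddChar.FiniteField.primitiveChar_to_Complex F
  have hψ : ψ.IsPrimitive := AddChar.FiniteField.primitiveChar_to_Complex_isPrimitive F
  set X := Fintype.piFinset fun i => range (orderOf (g i))
  set v : (Fin (n + 1) → ℕ) → F := fun x => ∑ i, (a i : F) * (g i : F) ^ x i
  have hmissed : {b : F | ¬ ∃ x : Fin (n + 1) → ℕ, (∀ i, x i < orderOf (g i)) ∧ v x = b} =
      ↑(X.image v)ᶜ := by
    ext b
    simp [X]
  have hE : ∑ b ∈ univ.erase 0, ‖∑ x ∈ X, ψ (b * v x)‖ ^ 2 ≤ (q : ℝ) ^ (n + 1) * s :=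
    (sum_congr rfl fun b _ => by rw [sum_piFinset_eq_prod_gaussPeriod]).trans_le
      (sum_norm_sq_prod_gaussPeriod_le hψ a g)
  have hX : (#X : ℝ) = ordProd g * s := by
    rw [Fintype.card_piFinset, Fin.prod_univ_castSucc]
    simp [ordProd, s]
  have hA : (q : ℝ) ^ (n + 1) * s * Real.log q < (#X : ℝ) ^ 2 := by
    rw [hX]
    nlinarith [mul_lt_mul_of_pos_right h (Nat.cast_pos.2 (orderOf_pos (g (Fin.last n))))]
  rw [hmissed, Set.ncard_coe_finset, card_compl, Nat.cast_sub (card_le_univ _)]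
  exact card_sub_card_image_le_div hψ X v hE
    (Real.log_pos (by exact_mod_cast Fintype.one_lt_card)) hA

/-- Assume `P² · s_{n+1} > q^{n+1} · log q`.  Then the number of elements `b ∈ F` for which
the equation `a₁g₁^{x₁} + ⋯ + a_{n+1}g_{n+1}^{x_{n+1}} = b` has no solution with
`0 ≤ xᵢ < sᵢ` for all `i` is at most `q / log q`. -/
theorem statement8 (p ν : ℕ) (hp : p.Prime) (hν : 1 ≤ ν)
    (F : Type*) [Field F] [Fintype F] [DecidableEq F]
    (hq : Fintype.card F = p ^ ν)
    (n : ℕ) (hn : 1 ≤ n)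
    (a g : Fin (n + 1) → Fˣ)
    (h : (ordProd g : ℝ) ^ 2 * (orderOf (g (Fin.last n)) : ℝ) >
        (Fintype.card F : ℝ) ^ (n + 1) * Real.log (Fintype.card F)) :
    (({b : F | ¬ ∃ x : Fin (n + 1) → ℕ, (∀ i, x i < orderOf (g i)) ∧
        ∑ i, (a i : F) * (g i : F) ^ x i = b}.ncard : ℝ)) ≤
      (Fintype.card F : ℝ) / Real.log (Fintype.card F) :=
  statement8_general F n a g h
end

section
/- Let n ≥ 2 and let s_1 ≥ s_2 ≥ ⋯ ≥ s_{n-1} ≥ 1 and r be real numbers with 1 ≤ r ≤ s_1. Then r · ∏_{l=2}^{n-1} s_l ≤ ( (∏_{l=1}^{n-1} s_l)² · r )^{(n-1)/(2n-1)}. -/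
/-!
Write `Q = ∏_{l=2}^{n-1} s_l`, so that `∏_{l=1}^{n-1} s_l = s_1 Q`. Raising both sides to the power
`2n - 1`, the claim becomes `(rQ)^{2n-1} ≤ (s_1² Q² r)^{n-1}`, i.e. `r^n Q ≤ s_1^{2n-2}`, which
follows from `r ≤ s_1` and `Q ≤ s_1^{n-2}`.
-/

open Finset

namespace Real

lemma le_rpow_natCast_div_of_pow_le {x y : ℝ} (hx : 0 ≤ x) (hy : 0 ≤ y) {p q : ℕ} (hp : p ≠ 0)
    (h : x ^ p ≤ y ^ q) : x ≤ y ^ ((q : ℝ) / p) := by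
  rw [div_eq_mul_inv, rpow_mul hy, rpow_natCast,
    le_rpow_inv_iff_of_pos hx (by positivity) (by positivity), rpow_natCast]
  exact h

end Real

lemma mul_pow_le_sq_mul_pow {a q r : ℝ} (m : ℕ) (hr : 0 ≤ r) (hra : r ≤ a) (hq : 0 ≤ q)
    (hqa : q ≤ a ^ m) : (r * q) ^ (2 * m + 3) ≤ ((a * q) ^ 2 * r) ^ (m + 1) := by
  have ha : 0 ≤ a := hr.trans hra
  have hkey : r ^ (m + 2) * q ≤ a ^ (2 * m + 2) :=
    calc r ^ (m + 2) * q ≤ a ^ (m + 2) * a ^ m := by gcongr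
      _ = a ^ (2 * m + 2) := by ring
  calc (r * q) ^ (2 * m + 3) = (r ^ (m + 2) * q) * (r ^ (m + 1) * q ^ (2 * m + 2)) := by ring
    _ ≤ a ^ (2 * m + 2) * (r ^ (m + 1) * q ^ (2 * m + 2)) := by gcongr
    _ = ((a * q) ^ 2 * r) ^ (m + 1) := by ring

lemma prod_Icc_two_le_pow (s : ℕ → ℝ) (m : ℕ) (hs : ∀ i ∈ Icc 2 (m + 1), 0 ≤ s i)
    (hle : ∀ i ∈ Icc 2 (m + 1), s i ≤ s 1) : ∏ l ∈ Icc 2 (m + 1), s l ≤ s 1 ^ m := by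
  calc ∏ l ∈ Icc 2 (m + 1), s l ≤ ∏ _l ∈ Icc 2 (m + 1), s 1 := prod_le_prod hs hle
    _ = s 1 ^ m := by simp

lemma prod_Icc_one_eq_mul_prod_Icc_two {M : Type*} [CommMonoid M] (s : ℕ → M) {k : ℕ}
    (hk : 1 ≤ k) : ∏ l ∈ Icc 1 k, s l = s 1 * ∏ l ∈ Icc 2 k, s l := by
  rw [Icc_eq_cons_Ioc hk, prod_cons, ← Icc_add_one_left_eq_Ioc, one_add_one_eq_two]

/-- Let `n ≥ 2` and let `s 1 ≥ s 2 ≥ ⋯ ≥ s (n-1) ≥ 1` and `r` be real numbers with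
`1 ≤ r ≤ s 1`.  Then `r · ∏_{l=2}^{n-1} s l ≤ ((∏_{l=1}^{n-1} s l)² · r)^{(n-1)/(2n-1)}`
(for `n = 2` the product `∏_{l=2}^{n-1}` is the empty product `1`; the exponent is a
real number). -/
theorem statement11 (n : ℕ) (hn : 2 ≤ n) (s : ℕ → ℝ) (r : ℝ)
    (hanti : ∀ i ∈ Finset.Icc 1 (n - 1), ∀ j ∈ Finset.Icc 1 (n - 1), i ≤ j → s j ≤ s i)
    (hs : ∀ i ∈ Finset.Icc 1 (n - 1), 1 ≤ s i)
    (hr1 : 1 ≤ r) (hrs : r ≤ s 1) :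
    r * (∏ l ∈ Finset.Icc 2 (n - 1), s l) ≤
      ((∏ l ∈ Finset.Icc 1 (n - 1), s l) ^ 2 * r) ^
        (((n : ℝ) - 1) / (2 * (n : ℝ) - 1)) := by
  obtain ⟨m, rfl⟩ : ∃ m, n = m + 2 := ⟨n - 2, by omega⟩
  simp only [show m + 2 - 1 = m + 1 by omega] at *
  have hmem : ∀ i ∈ Icc 2 (m + 1), i ∈ Icc 1 (m + 1) := fun i hi => by
    simp only [mem_Icc] at hi ⊢; omega
  have hone : 1 ∈ Icc 1 (m + 1) := by simp
  have hQ : 0 ≤ ∏ l ∈ Icc 2 (m + 1), s l :=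
    prod_nonneg fun i hi => zero_le_one.trans (hs i (hmem i hi))
  have hQle : ∏ l ∈ Icc 2 (m + 1), s l ≤ s 1 ^ m :=
    prod_Icc_two_le_pow s m (fun i hi => zero_le_one.trans (hs i (hmem i hi)))
      fun i hi => hanti 1 hone i (hmem i hi) (mem_Icc.1 (hmem i hi)).1
  rw [prod_Icc_one_eq_mul_prod_Icc_two s (by omega),
    show ((m + 2 : ℕ) : ℝ) - 1 = ((m + 1 : ℕ) : ℝ) by push_cast; ring,
    show 2 * ((m + 2 : ℕ) : ℝ) - 1 = ((2 * m + 3 : ℕ) : ℝ) by push_cast; ring]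
  have hr : 0 ≤ r := zero_le_one.trans hr1
  exact Real.le_rpow_natCast_div_of_pow_le (by positivity) (by positivity) (by omega)
    (mul_pow_le_sq_mul_pow m hr hrs hQ hQle)
end

section
/- Let n ≥ 2 and let s_1 ≥ s_2 ≥ ⋯ ≥ s_n ≥ 1 be real numbers. Then ∏_{l=2}^{n} s_l ≤ ( (∏_{l=1}^{n-1} s_l)² · s_n )^{(n-1)/(2n-1)}. -/
/-- Let `n ≥ 2` and let `s 1 ≥ s 2 ≥ ⋯ ≥ s n ≥ 1` be real numbers.  Then
`∏_{l=2}^{n} s l ≤ ((∏_{l=1}^{n-1} s l)² · s n)^{(n-1)/(2n-1)}` (the exponent is a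
real number). -/
theorem statement12 (n : ℕ) (hn : 2 ≤ n) (s : ℕ → ℝ)
    (hanti : ∀ i ∈ Finset.Icc 1 n, ∀ j ∈ Finset.Icc 1 n, i ≤ j → s j ≤ s i)
    (hs : ∀ i ∈ Finset.Icc 1 n, 1 ≤ s i) :
    (∏ l ∈ Finset.Icc 2 n, s l) ≤
      ((∏ l ∈ Finset.Icc 1 (n - 1), s l) ^ 2 * s n) ^
        (((n : ℝ) - 1) / (2 * (n : ℝ) - 1)) := by
  obtain ⟨m, rfl⟩ : ∃ m, n = m + 2 := ⟨n - 2, by omega⟩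
  set Q := ∏ l ∈ Finset.Icc 2 (m + 1), s l with hQdef
  have hs1 : (1 : ℝ) ≤ s 1 := hs 1 (by simp)
  have hsn : (1 : ℝ) ≤ s (m + 2) := hs (m + 2) (by simp)
  have hsn1 : s (m + 2) ≤ s 1 := hanti 1 (by simp) (m + 2) (by simp) (by omega)
  have hQ1 : (1 : ℝ) ≤ Q := by
    rw [hQdef]
    calc (1 : ℝ) = ∏ _l ∈ Finset.Icc 2 (m + 1), (1 : ℝ) := by simp
      _ ≤ ∏ l ∈ Finset.Icc 2 (m + 1), s l := by
          apply Finset.prod_le_prod (by intros; norm_num)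
          intro i hi
          simp only [Finset.mem_Icc] at hi
          exact hs i (by simp; omega)
  have hQle : Q ≤ s 1 ^ m := by
    calc Q ≤ ∏ _l ∈ Finset.Icc 2 (m + 1), s 1 := by
            apply Finset.prod_le_prod
            · intro i hi; simp only [Finset.mem_Icc] at hi
              linarith [hs i (by simp; omega)]
            · intro i hi; simp only [Finset.mem_Icc] at hi
              exact hanti 1 (by simp) i (by simp; omega) (by omega)
      _ = s 1 ^ m := by rw [Finset.prod_const, Nat.card_Icc]; congr 1
  have hA : ∏ l ∈ Finset.Icc 2 (m + 2), s l = Q * s (m + 2) :=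
    Finset.prod_Icc_succ_top (by omega) s
  have hP : ∏ l ∈ Finset.Icc 1 (m + 2 - 1), s l = s 1 * Q := by
    have h1 : Finset.Icc 1 (m + 2 - 1) = insert 1 (Finset.Icc 2 (m + 1)) := by
      ext x; simp; omega
    rw [h1, Finset.prod_insert (by simp)]
  rw [hA, hP]
  set A := Q * s (m + 2) with hAdef
  set B := (s 1 * Q) ^ 2 * s (m + 2) with hBdef
  have hA0 : (0 : ℝ) < A := by positivity
  have hB0 : (0 : ℝ) < B := by positivity
  have hkey : Q * s (m + 2) ^ (m + 2) ≤ s 1 ^ (2 * m + 2) := by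
    calc Q * s (m + 2) ^ (m + 2) ≤ s 1 ^ m * s 1 ^ (m + 2) := by
          apply mul_le_mul hQle (pow_le_pow_left₀ (by linarith) hsn1 _) (by positivity)
            (by positivity)
      _ = s 1 ^ (2 * m + 2) := by ring
  have hpow : A ^ (2 * m + 3) ≤ B ^ (m + 1) := by
    have e1 : A ^ (2 * m + 3) =
        (Q * s (m + 2) ^ (m + 2)) * (Q ^ (2 * m + 2) * s (m + 2) ^ (m + 1)) := by
      rw [hAdef]; ring
    have e2 : B ^ (m + 1) =
        s 1 ^ (2 * m + 2) * (Q ^ (2 * m + 2) * s (m + 2) ^ (m + 1)) := by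
      rw [hBdef]; ring
    rw [e1, e2]
    exact mul_le_mul_of_nonneg_right hkey (by positivity)
  have he : (((m + 2 : ℕ) : ℝ) - 1) / (2 * ((m + 2 : ℕ) : ℝ) - 1) =
      ((m : ℝ) + 1) / (2 * (m : ℝ) + 3) := by push_cast; ring_nf
  rw [he]
  have h1 : A = (A ^ (2 * m + 3 : ℕ)) ^ ((2 * (m : ℝ) + 3)⁻¹) := by
    rw [← Real.rpow_natCast A (2 * m + 3), ← Real.rpow_mul hA0.le]
    rw [show ((2 * m + 3 : ℕ) : ℝ) * (2 * (m : ℝ) + 3)⁻¹ = 1 by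
      push_cast; field_simp]
    simp
  have h2 : B ^ (((m : ℝ) + 1) / (2 * (m : ℝ) + 3)) =
      (B ^ (m + 1 : ℕ)) ^ ((2 * (m : ℝ) + 3)⁻¹) := by
    rw [← Real.rpow_natCast B (m + 1), ← Real.rpow_mul hB0.le]
    congr 1
    push_cast
    ring
  rw [h2]
  calc A = (A ^ (2 * m + 3 : ℕ)) ^ ((2 * (m : ℝ) + 3)⁻¹) := h1
    _ ≤ (B ^ (m + 1 : ℕ)) ^ ((2 * (m : ℝ) + 3)⁻¹) :=
        Real.rpow_le_rpow (by positivity) hpow (by positivity)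
end
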